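/- arXiv:math/0612472 — 3 statements merged into one kernel-verified Lean document; each statement's English description precedes it below -/
import Mathlib

section
/- The function x(t) = 1 − (u(t) − 1)/t, where u(t) = f⁻¹(t − 1 − π/2) and f(s) = √(s² − 1) + arcsin(1/s), is strictly decreasing on [π + 1, 5] (its derivative is negative there). -/
/-!
Since `f'(s) = √(s² − 1)/s` lies in `(0, 1)` for `s > 1`, both `f` and `f − id` are strictly
monotone, so `u` increases faster than `t`. Hence `x(t) = (t + 1 − u(t))/t` is a positive,
strictly decreasing numerator over an increasing positive denominator.
-/

noncomputable section

open Real

/-- `f(s) = √(s² − 1) + arcsin(1/s)`. -/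
def fDS (s : ℝ) : ℝ := Real.sqrt (s ^ 2 - 1) + Real.arcsin (1 / s)

/-- The inverse of `f` on `[1, ∞)`. -/
def fDSInv : ℝ → ℝ := Function.invFunOn fDS (Set.Ici 1)

/-- `u(t) = f⁻¹(t − 1 − π/2)`. -/
def uFun (t : ℝ) : ℝ := fDSInv (t - 1 - π / 2)

/-- `x(t) = 1 − (u(t) − 1)/t`. -/
def xFun (t : ℝ) : ℝ := 1 - (uFun t - 1) / t

open Set

lemma StrictAntiOn.div_id_of_nonneg {N : ℝ → ℝ} {s : Set ℝ} (hN : StrictAntiOn N s)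
    (hN₀ : ∀ t ∈ s, 0 ≤ N t) (hs : s ⊆ Ioi 0) : StrictAntiOn (fun t => N t / t) s := by
  intro a ha b hb hab
  calc N b / b < N a / b := div_lt_div_of_pos_right (hN ha hb hab) (hs hb)
    _ ≤ N a / a := div_le_div_of_nonneg_left (hN₀ a ha) (hs ha) hab.le

lemma hasDerivAt_fDS {s : ℝ} (hs : 1 < s) :
    HasDerivAt fDS (√(s ^ 2 - 1) / s) s := by
  have hs₀ : 0 < s := by linarith
  have hsq : 0 < s ^ 2 - 1 := by nlinarith
  have hsqrt : HasDerivAt (fun x : ℝ => √(x ^ 2 - 1))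
      (1 / (2 * √(s ^ 2 - 1)) * (2 * s ^ 1)) s :=
    (hasDerivAt_sqrt hsq.ne').comp s ((hasDerivAt_pow 2 s).sub_const 1)
  have hinv : HasDerivAt (fun x : ℝ => 1 / x) (-(s ^ 2)⁻¹) s := by
    simpa only [one_div] using hasDerivAt_inv hs₀.ne'
  have hlt : 1 / s < 1 := (div_lt_one hs₀).mpr hs
  have harcsin : HasDerivAt (fun x : ℝ => arcsin (1 / x))
      (1 / √(1 - (1 / s) ^ 2) * -(s ^ 2)⁻¹) s :=
    (hasDerivAt_arcsin (by linarith [one_div_pos.mpr hs₀]) hlt.ne).comp s hinv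
  have hroot : √(1 - (1 / s) ^ 2) = √(s ^ 2 - 1) / s := by
    rw [show 1 - (1 / s) ^ 2 = (s ^ 2 - 1) / s ^ 2 by field_simp, sqrt_div hsq.le,
      sqrt_sq hs₀.le]
  refine (hsqrt.add harcsin).congr_deriv ?_
  rw [hroot]
  have hsqrt_pos : 0 < √(s ^ 2 - 1) := sqrt_pos.mpr hsq
  field_simp
  linear_combination -sq_sqrt hsq.le

lemma continuousOn_fDS : ContinuousOn fDS (Ici 1) := by
  refine (continuous_sqrt.comp (by fun_prop)).continuousOn.add
    (continuous_arcsin.comp_continuousOn (continuousOn_const.div continuousOn_id ?_))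
  intro x hx
  exact (zero_lt_one.trans_le hx).ne'

lemma fDS_one : fDS 1 = π / 2 := by
  simp [fDS, arcsin_one]

lemma sub_one_le_fDS {s : ℝ} (hs : 1 ≤ s) : s - 1 ≤ fDS s := by
  have hroot : s - 1 ≤ √(s ^ 2 - 1) := le_sqrt_of_sq_le (by nlinarith)
  have harcsin : 0 ≤ arcsin (1 / s) := arcsin_nonneg.mpr (by positivity)
  unfold fDS
  linarith

lemma strictMonoOn_fDS : StrictMonoOn fDS (Ici 1) := by
  refine strictMonoOn_of_hasDerivWithinAt_pos (convex_Ici 1) continuousOn_fDS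
    (f' := fun s => √(s ^ 2 - 1) / s) (fun s hs => ?_) (fun s hs => ?_)
  all_goals rw [interior_Ici, mem_Ioi] at hs
  · exact (hasDerivAt_fDS hs).hasDerivWithinAt
  · have : 0 < s ^ 2 - 1 := by nlinarith
    positivity

lemma strictAntiOn_fDS_sub_id : StrictAntiOn (fun s => fDS s - s) (Ici 1) := by
  refine strictAntiOn_of_hasDerivWithinAt_neg (convex_Ici 1)
    (continuousOn_fDS.sub continuousOn_id) (f' := fun s => √(s ^ 2 - 1) / s - 1)
    (fun s hs => ?_) (fun s hs => ?_)
  all_goals rw [interior_Ici, mem_Ioi] at hs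
  · exact ((hasDerivAt_fDS hs).sub (hasDerivAt_id s)).hasDerivWithinAt
  · have hs₀ : 0 < s := by linarith
    have hroot : √(s ^ 2 - 1) < s := (sqrt_lt' hs₀).mpr (by linarith)
    linarith [(div_lt_one hs₀).mpr hroot]

lemma surjOn_fDS : SurjOn fDS (Ici 1) (Ici (π / 2)) := by
  intro y hy
  rw [mem_Ici] at hy
  have hle : (1 : ℝ) ≤ y + 1 := by linarith [pi_pos]
  have hy_mem : y ∈ Icc (fDS 1) (fDS (y + 1)) :=
    ⟨fDS_one ▸ hy, by linarith [sub_one_le_fDS hle]⟩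
  obtain ⟨s, hs, hfs⟩ :=
    intermediate_value_Icc hle (continuousOn_fDS.mono Icc_subset_Ici_self) hy_mem
  exact ⟨s, hs.1, hfs⟩

lemma fDSInv_mem_Ici {y : ℝ} (hy : π / 2 ≤ y) : fDSInv y ∈ Ici 1 :=
  Function.invFunOn_mem (surjOn_fDS hy)

lemma fDS_fDSInv {y : ℝ} (hy : π / 2 ≤ y) : fDS (fDSInv y) = y :=
  Function.invFunOn_eq (surjOn_fDS hy)

lemma fDSInv_le_add_one {y : ℝ} (hy : π / 2 ≤ y) : fDSInv y ≤ y + 1 := by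
  linarith [sub_one_le_fDS (fDSInv_mem_Ici hy), fDS_fDSInv hy]

lemma strictMonoOn_fDSInv_sub_id : StrictMonoOn (fun y => fDSInv y - y) (Ici (π / 2)) := by
  intro a ha b hb hab
  have hfa := fDS_fDSInv ha
  have hfb := fDS_fDSInv hb
  have hlt : fDSInv a < fDSInv b := by
    rwa [← strictMonoOn_fDS.lt_iff_lt (fDSInv_mem_Ici ha) (fDSInv_mem_Ici hb), hfa, hfb]
  have := strictAntiOn_fDS_sub_id (fDSInv_mem_Ici ha) (fDSInv_mem_Ici hb) hlt
  simp only [hfa, hfb] at this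
  linarith

lemma sub_one_sub_pi_div_two_mem {t : ℝ} (ht : t ∈ Ici (π + 1)) :
    t - 1 - π / 2 ∈ Ici (π / 2) := by
  rw [mem_Ici] at ht ⊢
  linarith

lemma strictAntiOn_add_one_sub_uFun : StrictAntiOn (fun t => t + 1 - uFun t) (Ici (π + 1)) := by
  intro a ha b hb hab
  have := strictMonoOn_fDSInv_sub_id (sub_one_sub_pi_div_two_mem ha)
    (sub_one_sub_pi_div_two_mem hb) (by linarith : a - 1 - π / 2 < b - 1 - π / 2)
  simp only [uFun] at this ⊢
  linarith

lemma add_one_sub_uFun_pos {t : ℝ} (ht : t ∈ Ici (π + 1)) : 0 < t + 1 - uFun t := by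
  have := fDSInv_le_add_one (sub_one_sub_pi_div_two_mem ht)
  rw [uFun]
  linarith [pi_pos]

lemma xFun_eq_div {t : ℝ} (ht : t ≠ 0) : xFun t = (t + 1 - uFun t) / t := by
  rw [xFun]
  field_simp
  ring

lemma xFun_strictAntiOn_Ici : StrictAntiOn xFun (Ici (π + 1)) := by
  have hpos : Ici (π + 1) ⊆ Ioi 0 := fun t ht => by
    rw [mem_Ici] at ht
    exact mem_Ioi.mpr (by linarith [pi_pos])
  refine (strictAntiOn_add_one_sub_uFun.div_id_of_nonneg
    (fun t ht => (add_one_sub_uFun_pos ht).le) hpos).congr fun t ht => ?_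
  exact (xFun_eq_div (hpos ht).ne').symm

/-- The function `x(t) = 1 − (u(t) − 1)/t`, with
`u(t) = f⁻¹(t − 1 − π/2)` and `f(s) = √(s² − 1) + arcsin(1/s)`, is strictly
decreasing on `[π + 1, 5]`. -/
theorem xFun_strictAntiOn : StrictAntiOn xFun (Set.Icc (π + 1) 5) :=
  xFun_strictAntiOn_Ici.mono Icc_subset_Ici_self
end
end

section
/- Let t ∈ [π + 1, 5], ψ = arcsin(1/t), and let q ∈ [0, ψ + π/2) satisfy (t + 1)/(t + g_ψ(q)) ≥ x(t), where g_ψ(s) = e^{s·tan ψ}·cos ψ / cos(ψ − s), x(t) = 1 − (u(t) − 1)/t, u(t) = f⁻¹(t − 1 − π/2), and f(s) = √(s² − 1) + arcsin(1/s). Then 0.76 < x(t) ≤ (t + 1)/(t + g_ψ(q)) ≤ 1 and 0 ≤ q < 1.32. -/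
noncomputable section

open Real

/-- `g_ψ(s) = e^{s·tan ψ}·cos ψ / cos(ψ − s)`. -/
def gFun (ψ s : ℝ) : ℝ := Real.exp (s * Real.tan ψ) * Real.cos ψ / Real.cos (ψ - s)

/-!
On `(1, ∞)` the derivative of `f` is `√(s² - 1) / s ∈ (0, 1)`, so `f` is strictly increasing and
`1`-Lipschitz. Hence `f(1 + 0.24 t) ≥ f(2.2) - (5 - t) > t - 1 - π/2` follows from the single
numerical fact `f(2.2) > 4 - π/2`, and inverting gives `u(t) < 1 + 0.24 t`, i.e. `x(t) > 0.76`.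

Since `cos(ψ - q) ≤ cos ψ + q sin ψ ≤ cos ψ · e^{q tan ψ}`, we have `g_ψ(q) ≥ 1`, so the quotient is
at most `1`. On `[ψ, ψ + π/2)` the function `g_ψ` is increasing, and `e^a ≥ 1 + a + a²/2` together
with bounds on `cos 1.32`, `sin 1.32` gives `0.76 g_ψ(1.32) > 1 + 0.24 t`. So `q ≥ 1.32` would push
the quotient below `0.76 < x(t)`.
-/

open Set

lemma fDS_sub_fDS_le {a b : ℝ} (ha : 1 ≤ a) (hab : a ≤ b) : fDS b - fDS a ≤ b - a := by
  have hderiv : ∀ s ∈ interior (Ici (1 : ℝ)),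
      HasDerivAt (fun s => s - fDS s) (1 - √(s ^ 2 - 1) / s) s := fun s hs =>
    (hasDerivAt_id' s).sub (hasDerivAt_fDS (by rwa [interior_Ici] at hs))
  have hmono : MonotoneOn (fun s => s - fDS s) (Ici 1) := by
    refine monotoneOn_of_deriv_nonneg (convex_Ici 1) (continuousOn_id.sub continuousOn_fDS)
      (fun s hs => (hderiv s hs).differentiableAt.differentiableWithinAt) fun s hs => ?_
    rw [(hderiv s hs).deriv, sub_nonneg]
    rw [interior_Ici, mem_Ioi] at hs
    exact div_le_one_of_le₀ ((Real.sqrt_le_left (by linarith)).2 (by linarith)) (by linarith)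
  have := hmono ha (le_trans ha hab) hab
  simp only at this
  linarith

lemma fDSInv_lt_of_lt_fDS {y b : ℝ} (hy : π / 2 ≤ y) (hb : 1 ≤ b) (h : y < fDS b) :
    fDSInv y < b := by
  have hex := surjOn_fDS (mem_Ici.2 hy)
  refine (strictMonoOn_fDS.lt_iff_lt (Function.invFunOn_mem hex) hb).1 ?_
  exact (Function.invFunOn_eq hex).trans_lt h

lemma cos_1_1_lt : cos 1.1 < 5 / 11 := by
  have hsin : 0.55 - 0.55 ^ 3 / 6 ≤ sin 0.55 := Real.sin_ge_sub_cube (by norm_num)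
  have hcos : cos 1.1 = 1 - 2 * sin 0.55 ^ 2 := by
    rw [← Real.cos_two_mul_eq_one_sub]; norm_num
  rw [hcos]
  nlinarith

lemma lt_fDS_2_2 : 4 - π / 2 < fDS 2.2 := by
  have hsqrt : 1.959 ≤ √(2.2 ^ 2 - 1) := Real.le_sqrt_of_sq_le (by norm_num)
  have harccos : arccos (1 / 2.2) < 1.1 := by
    calc arccos (1 / 2.2) < arccos (cos 1.1) :=
          Real.arccos_lt_arccos (by linarith [Real.neg_one_le_cos 1.1]) (by linarith [cos_1_1_lt])
            (by norm_num)
      _ = 1.1 := Real.arccos_cos (by norm_num) (by linarith [Real.pi_gt_three])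
  rw [fDS, Real.arcsin_eq_pi_div_two_sub_arccos]
  linarith [Real.pi_gt_d6]

lemma uFun_lt {t : ℝ} (ht₁ : π + 1 ≤ t) (ht₂ : t ≤ 5) : uFun t < 1 + 0.24 * t := by
  have hlip := fDS_sub_fDS_le (a := 1 + 0.24 * t) (b := 2.2) (by linarith [Real.pi_pos])
    (by linarith)
  exact fDSInv_lt_of_lt_fDS (by linarith) (by linarith [Real.pi_pos]) (by linarith [lt_fDS_2_2])

lemma lt_xFun {t : ℝ} (ht₁ : π + 1 ≤ t) (ht₂ : t ≤ 5) : 0.76 < xFun t := by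
  have ht0 : 0 < t := by linarith [Real.pi_pos]
  have : (uFun t - 1) / t < 0.24 := (div_lt_iff₀ ht0).2 (by linarith [uFun_lt ht₁ ht₂])
  unfold xFun; linarith

section gFun

variable {ψ : ℝ}

lemma cos_sub_pos {q : ℝ} (hq₀ : 0 ≤ q) (hψ : ψ < π / 2) (hq : q < ψ + π / 2) :
    0 < cos (ψ - q) :=
  Real.cos_pos_of_mem_Ioo ⟨by linarith, by linarith⟩

lemma cos_sub_le_cos_add_mul_sin {q : ℝ} (hc : 0 ≤ cos ψ) (hs : 0 ≤ sin ψ) (hq₀ : 0 ≤ q) :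
    cos (ψ - q) ≤ cos ψ + q * sin ψ := by
  rw [Real.cos_sub]
  linarith [mul_le_of_le_one_right hc (Real.cos_le_one q),
    mul_le_mul_of_nonneg_left (Real.sin_le hq₀) hs]

lemma quadratic_le_gFun_mul_cos_sub {q : ℝ} (hψ₀ : 0 ≤ ψ) (hψ : ψ < π / 2) (hq₀ : 0 ≤ q)
    (hq : q < ψ + π / 2) :
    cos ψ + q * sin ψ + (q * sin ψ) ^ 2 / 2 ≤ gFun ψ q * cos (ψ - q) := by
  have hc : 0 < cos ψ := Real.cos_pos_of_mem_Ioo ⟨by linarith, hψ⟩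
  have ha : q * tan ψ * cos ψ = q * sin ψ := by
    rw [Real.tan_eq_sin_div_cos]; field_simp
  have ha₀ : 0 ≤ q * tan ψ :=
    mul_nonneg hq₀ (Real.tan_nonneg_of_nonneg_of_le_pi_div_two hψ₀ hψ.le)
  rw [gFun, div_mul_cancel₀ _ (cos_sub_pos hq₀ hψ hq).ne']
  calc cos ψ + q * sin ψ + (q * sin ψ) ^ 2 / 2
      ≤ (1 + q * tan ψ + (q * tan ψ) ^ 2 / 2) * cos ψ := by
        rw [← ha]; nlinarith [Real.cos_le_one ψ, sq_nonneg (q * tan ψ)]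
    _ ≤ exp (q * tan ψ) * cos ψ := by gcongr; exact Real.quadratic_le_exp_of_nonneg ha₀

lemma one_le_gFun {q : ℝ} (hψ₀ : 0 ≤ ψ) (hψ : ψ < π / 2) (hq₀ : 0 ≤ q) (hq : q < ψ + π / 2) :
    1 ≤ gFun ψ q := by
  have hc : 0 < cos ψ := Real.cos_pos_of_mem_Ioo ⟨by linarith, hψ⟩
  have hs : 0 ≤ sin ψ := Real.sin_nonneg_of_nonneg_of_le_pi hψ₀ (by linarith)
  refine (le_mul_iff_one_le_left (cos_sub_pos hq₀ hψ hq)).1 ?_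
  linarith [cos_sub_le_cos_add_mul_sin hc.le hs hq₀, quadratic_le_gFun_mul_cos_sub hψ₀ hψ hq₀ hq,
    sq_nonneg (q * sin ψ)]

lemma monotoneOn_gFun (hψ₀ : 0 ≤ ψ) (hψ : ψ < π / 2) :
    MonotoneOn (gFun ψ) (Ico ψ (ψ + π / 2)) := by
  intro a ⟨ha, _⟩ q ⟨_, hq⟩ haq
  have hc : 0 < cos ψ := Real.cos_pos_of_mem_Ioo ⟨by linarith, hψ⟩
  have htan : 0 ≤ tan ψ := Real.tan_nonneg_of_nonneg_of_le_pi_div_two hψ₀ hψ.le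
  unfold gFun
  gcongr ?_ * _ / ?_
  · exact cos_sub_pos (by linarith) hψ hq
  · gcongr
  · rw [← Real.cos_neg, ← Real.cos_neg (ψ - a)]
    exact Real.cos_le_cos_of_nonneg_of_le_pi (by linarith) (by linarith) (by linarith)

end gFun

lemma cos_1_32_lt : cos 1.32 < 0.2508 := by
  rw [← Real.sin_pi_div_two_sub]
  linarith [Real.sin_le (x := π / 2 - 1.32) (by linarith [Real.pi_gt_three]), Real.pi_lt_d6]

lemma sin_1_32_lt : sin 1.32 < 0.969 := by
  have hy : 0.2507 ≤ π / 2 - 1.32 := by linarith [Real.pi_gt_d6]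
  have hcos : 0.2507 - 0.2507 ^ 3 / 6 ≤ cos 1.32 := by
    rw [← Real.sin_pi_div_two_sub]
    exact (Real.sin_ge_sub_cube (by norm_num)).trans
      (Real.sin_le_sin_of_le_of_le_pi_div_two (by linarith [Real.pi_pos]) (by norm_num) hy)
  nlinarith [Real.sin_sq_add_cos_sq 1.32]

lemma lt_gFun_arcsin_one_div {t : ℝ} (ht₁ : 4.1415 ≤ t) (ht₂ : t ≤ 5) :
    0.24 * t + 1 < 0.76 * gFun (arcsin (1 / t)) 1.32 := by
  set s := 1 / t with hs
  set ψ := arcsin s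
  have ht₀ : 0 < t := by linarith
  have hs₁ : 0.2 ≤ s := by rw [hs, le_div_iff₀ ht₀]; linarith
  have hs₂ : s ≤ 0.2415 := by rw [hs, div_le_iff₀ ht₀]; linarith
  have hψ₀ : 0 ≤ ψ := Real.arcsin_nonneg.2 (by linarith)
  have hψ : ψ < π / 2 := Real.arcsin_lt_pi_div_two.2 (by linarith)
  have hsin : sin ψ = s := Real.sin_arcsin (by linarith) (by linarith)
  have hc₀ : 0 < cos ψ := Real.cos_pos_of_mem_Ioo ⟨by linarith, hψ⟩
  have hc : cos ψ ^ 2 = 1 - s ^ 2 := by rw [Real.cos_sq', hsin]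
  have hD : cos (ψ - 1.32) ≤ 0.2508 * cos ψ + 0.969 * s := by
    rw [Real.cos_sub, hsin]
    linarith [mul_le_mul_of_nonneg_left cos_1_32_lt.le hc₀.le,
      mul_le_mul_of_nonneg_left sin_1_32_lt.le (by linarith : (0 : ℝ) ≤ s)]
  have hnum : cos ψ + 1.32 * s + (1.32 * s) ^ 2 / 2 ≤ gFun ψ 1.32 * cos (ψ - 1.32) := by
    simpa only [hsin] using
      quadratic_le_gFun_mul_cos_sub hψ₀ hψ (by norm_num) (by linarith [Real.pi_gt_three])
  have hpoly : (0.24 + s) * (0.2508 * cos ψ + 0.969 * s) <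
      0.76 * s * (cos ψ + 1.32 * s + (1.32 * s) ^ 2 / 2) := by
    have hc₁ : 0.97 ≤ cos ψ := by nlinarith
    nlinarith [mul_nonneg (sub_nonneg.2 hs₁) (sub_nonneg.2 hc₁),
      mul_nonneg (sub_nonneg.2 hs₁) (sub_nonneg.2 hs₂)]
  have hg : 0 ≤ gFun ψ 1.32 :=
    zero_le_one.trans (one_le_gFun hψ₀ hψ (by norm_num) (by linarith [Real.pi_gt_three]))
  have key : 0.24 + s < 0.76 * s * gFun ψ 1.32 := by
    refine lt_of_mul_lt_mul_right ?_ (by positivity : (0 : ℝ) ≤ 0.2508 * cos ψ + 0.969 * s)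
    calc (0.24 + s) * (0.2508 * cos ψ + 0.969 * s)
        < 0.76 * s * (cos ψ + 1.32 * s + (1.32 * s) ^ 2 / 2) := hpoly
      _ ≤ 0.76 * s * (gFun ψ 1.32 * cos (ψ - 1.32)) := by gcongr
      _ ≤ 0.76 * s * gFun ψ 1.32 * (0.2508 * cos ψ + 0.969 * s) := by
          rw [← mul_assoc]
          exact mul_le_mul_of_nonneg_left hD (mul_nonneg (by linarith) hg)
  calc 0.24 * t + 1 = t * (0.24 + s) := by rw [hs]; field_simp
    _ < t * (0.76 * s * gFun ψ 1.32) := by gcongr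
    _ = 0.76 * gFun ψ 1.32 := by rw [hs]; field_simp

/-- Let `t ∈ [π + 1, 5]`, `ψ = arcsin(1/t)`, and let
`q ∈ [0, ψ + π/2)` satisfy `(t + 1)/(t + g_ψ(q)) ≥ x(t)`.  Then
`0.76 < x(t) ≤ (t + 1)/(t + g_ψ(q)) ≤ 1` and `0 ≤ q < 1.32`. -/
theorem xQ_and_q_bounds (t : ℝ) (ht : t ∈ Set.Icc (π + 1) 5)
    (ψ : ℝ) (hψ : ψ = Real.arcsin (1 / t))
    (q : ℝ) (hq : q ∈ Set.Ico 0 (ψ + π / 2))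
    (hxq : xFun t ≤ (t + 1) / (t + gFun ψ q)) :
    (0.76 < xFun t ∧ xFun t ≤ (t + 1) / (t + gFun ψ q) ∧
      (t + 1) / (t + gFun ψ q) ≤ 1) ∧
    (0 ≤ q ∧ q < 1.32) := by
  obtain ⟨ht₁, ht₂⟩ := ht
  obtain ⟨hq₀, hq⟩ := hq
  have ht₀ : 0 < t := by linarith [Real.pi_pos]
  have hψ₀ : 0 ≤ ψ := hψ ▸ Real.arcsin_nonneg.2 (by positivity)
  have hψ₁ : ψ < π / 2 :=
    hψ ▸ Real.arcsin_lt_pi_div_two.2 ((div_lt_one ht₀).2 (by linarith [Real.pi_pos]))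
  have hg : 1 ≤ gFun ψ q := one_le_gFun hψ₀ hψ₁ hq₀ hq
  have hden : 0 < t + gFun ψ q := by linarith
  refine ⟨⟨lt_xFun ht₁ ht₂, hxq, (div_le_one hden).2 (by linarith)⟩, hq₀, ?_⟩
  by_contra! hq₁
  have hψ_le : ψ ≤ π / 6 := by
    rw [hψ, Real.arcsin_le_iff_le_sin' ⟨by linarith [Real.pi_pos], by linarith [Real.pi_pos]⟩,
      Real.sin_pi_div_six, div_le_iff₀ ht₀]
    linarith [Real.pi_gt_three]
  have hmono : gFun ψ 1.32 ≤ gFun ψ q := monotoneOn_gFun hψ₀ hψ₁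
    ⟨by linarith [Real.pi_lt_four], by linarith [Real.pi_gt_three]⟩ ⟨by linarith, hq⟩ hq₁
  have hlt := lt_gFun_arcsin_one_div (by linarith [Real.pi_gt_d4]) ht₂
  rw [← hψ] at hlt
  have : (t + 1) / (t + gFun ψ q) < 0.76 := (div_lt_iff₀ hden).2 (by linarith)
  linarith [lt_xFun ht₁ ht₂]
end
end

section
/- Let t ∈ [π + 1, 5], ψ = arcsin(1/t), q ∈ [0, 1.32], and set x_Q = (t + 1)/(t + g_ψ(q)) with g_ψ(s) = e^{s·tan ψ}·cos ψ / cos(ψ − s). Then q + (cot ψ / 2)·ln x_Q < 0.9. -/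
/-!
Writing `S = sin ψ = 1/t` and `C = cos ψ`, the bound `log x ≤ x - 1` reduces the claim to
`2 (q - 0.9) (1 + S g) < C (g - 1)` with `g = g_ψ(q)`. Since `g ≥ 1`, this is clear for `q < 0.9`.
For `q ≥ 0.9` we bound `g` from below using `e^x ≥ (1 + x/2)²` and
`cos(ψ - q) ≤ (π/2 - q) C + S`, which leaves a polynomial inequality in `q`, `S`, `C`.
-/

noncomputable section

open Real

lemma sq_one_add_half_le_exp {x : ℝ} (hx : -2 ≤ x) : (1 + x / 2) ^ 2 ≤ exp x := by
  have h : exp (x / 2) ^ 2 = exp x := by rw [← exp_nat_mul]; ring_nf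
  rw [← h]
  exact pow_le_pow_left₀ (by linarith) (by linarith [add_one_le_exp (x / 2)]) 2

lemma cos_le_pi_div_two_sub {x : ℝ} (hx : x ≤ π / 2) : cos x ≤ π / 2 - x := by
  simpa only [sin_pi_div_two_sub] using sin_le (sub_nonneg.2 hx)

lemma cos_mul_one_add_mul_tan {ψ : ℝ} (hC : cos ψ ≠ 0) (s : ℝ) :
    cos ψ * (1 + s * tan ψ) = cos ψ + s * sin ψ := by
  rw [tan_eq_sin_div_cos]; field_simp

lemma cos_sub_pos_s15 {ψ s : ℝ} (hC : 0 < cos ψ) (hS : 0 ≤ sin ψ) (hs₀ : 0 ≤ s) (hs : s < π / 2) :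
    0 < cos (ψ - s) := by
  have hcos : 0 < cos s := cos_pos_of_mem_Ioo ⟨by linarith [pi_pos], hs⟩
  have hsin : 0 ≤ sin s := sin_nonneg_of_nonneg_of_le_pi hs₀ (by linarith [pi_pos])
  rw [cos_sub]
  positivity

lemma cos_sub_le {ψ s : ℝ} (hC : 0 ≤ cos ψ) (hS : 0 ≤ sin ψ) (hs : s ≤ π / 2) :
    cos (ψ - s) ≤ (π / 2 - s) * cos ψ + sin ψ := by
  have h₁ := mul_le_mul_of_nonneg_left (cos_le_pi_div_two_sub hs) hC
  have h₂ := mul_le_of_le_one_right hS (sin_le_one s)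
  rw [cos_sub]
  linarith

lemma gFun_mul_cos_sub {ψ s : ℝ} (h : cos (ψ - s) ≠ 0) :
    gFun ψ s * cos (ψ - s) = exp (s * tan ψ) * cos ψ :=
  div_mul_cancel₀ _ h

lemma one_le_gFun_s15 {ψ s : ℝ} (hC : 0 < cos ψ) (hS : 0 ≤ sin ψ) (hs : 0 ≤ s)
    (hcos : 0 < cos (ψ - s)) : 1 ≤ gFun ψ s := by
  have hlin : cos (ψ - s) ≤ cos ψ + s * sin ψ := by
    have h₁ := mul_le_of_le_one_right hC.le (cos_le_one s)
    have h₂ := mul_le_mul_of_nonneg_left (sin_le hs) hS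
    rw [cos_sub]
    linarith
  have hexp : cos ψ + s * sin ψ ≤ exp (s * tan ψ) * cos ψ := by
    rw [← cos_mul_one_add_mul_tan hC.ne', mul_comm, add_comm]
    exact mul_le_mul_of_nonneg_right (add_one_le_exp _) hC.le
  rw [gFun, one_le_div hcos]
  linarith

lemma sq_cos_add_mul_sin_half_le {ψ s : ℝ} (hC : 0 < cos ψ) (hs : -2 ≤ s * tan ψ)
    (hcos : cos (ψ - s) ≠ 0) :
    (cos ψ + s * sin ψ / 2) ^ 2 ≤ cos ψ * (gFun ψ s * cos (ψ - s)) := by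
  have h := cos_mul_one_add_mul_tan hC.ne' (s / 2)
  have hexp := mul_le_mul_of_nonneg_left (sq_one_add_half_le_exp hs) (sq_nonneg (cos ψ))
  rw [gFun_mul_cos_sub hcos]
  calc (cos ψ + s * sin ψ / 2) ^ 2 = cos ψ ^ 2 * (1 + s * tan ψ / 2) ^ 2 := by
        rw [← mul_pow, show s * tan ψ / 2 = s / 2 * tan ψ by ring, h]; ring
    _ ≤ cos ψ * (exp (s * tan ψ) * cos ψ) := by linarith

lemma add_cot_div_two_mul_log_lt {t ψ q g c : ℝ} (ht : 0 < t) (htg : 0 < t + g)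
    (hS : t * sin ψ = 1) (hC : 0 ≤ cos ψ)
    (h : 2 * (q - c) * (1 + g * sin ψ) < cos ψ * (g - 1)) :
    q + cot ψ / 2 * log ((t + 1) / (t + g)) < c := by
  have hS₀ : 0 < sin ψ := pos_of_mul_pos_right (hS ▸ one_pos) ht.le
  have hcot : 0 ≤ cot ψ / 2 := by rw [cot_eq_cos_div_sin]; positivity
  have hlog := mul_le_mul_of_nonneg_left
    (log_le_sub_one_of_pos (x := (t + 1) / (t + g)) (by positivity)) hcot
  have hsum : 1 + g * sin ψ = sin ψ * (t + g) := by linear_combination -hS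
  have hgS : 0 < 1 + g * sin ψ := hsum ▸ mul_pos hS₀ htg
  have e : cot ψ / 2 * ((t + 1) / (t + g) - 1) = cos ψ * (1 - g) / (2 * (1 + g * sin ψ)) := by
    rw [hsum, cot_eq_cos_div_sin]
    field_simp
    ring
  have hlt : cos ψ * (1 - g) / (2 * (1 + g * sin ψ)) < c - q := by
    rw [div_lt_iff₀ (by positivity)]
    linarith
  linarith

/-- The inequality left once `g_ψ(q)` is replaced by its lower bound
`(C + q S / 2)² / (C ((1.5708 - q) C + S))`, where `S = sin ψ`, `C = cos ψ`. -/
lemma polynomial_ineq_of_bounds {q S C : ℝ} (hq₀ : 0.9 ≤ q) (hq₁ : q ≤ 1.32) (hS₀ : 0.2 ≤ S)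
    (hS₁ : S ≤ 0.2415) (hC₀ : 0.97 ≤ C) (hSC : C ^ 2 = 1 - S ^ 2) :
    (C + 2 * (q - 0.9)) * (C * ((1.5708 - q) * C + S)) <
      (C - 2 * (q - 0.9) * S) * (C + q * S / 2) ^ 2 := by
  rw [← sub_pos]
  rcases le_total q 1.11 with h | h
  · nlinarith [sq_nonneg (q - 1.0), mul_nonneg (sub_nonneg.2 hq₀) (sub_nonneg.2 hS₀),
      mul_nonneg (sub_nonneg.2 hq₀) (sub_nonneg.2 hC₀), sq_nonneg (S - 0.22),
      mul_nonneg (sub_nonneg.2 hS₀) (sub_nonneg.2 hC₀), sq_nonneg (C - 0.97),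
      mul_nonneg (sub_nonneg.2 h) (sub_nonneg.2 hS₀),
      mul_nonneg (sub_nonneg.2 h) (sub_nonneg.2 hC₀)]
  · nlinarith [sq_nonneg (q - 1.22), mul_nonneg (sub_nonneg.2 h) (sub_nonneg.2 hS₀),
      mul_nonneg (sub_nonneg.2 h) (sub_nonneg.2 hC₀), sq_nonneg (S - 0.2415),
      mul_nonneg (sub_nonneg.2 hS₀) (sub_nonneg.2 hC₀), sq_nonneg (C - 0.97),
      mul_nonneg (sub_nonneg.2 hS₁) (sub_nonneg.2 hC₀),
      mul_nonneg (sub_nonneg.2 hS₁) (sub_nonneg.2 h),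
      mul_nonneg (sub_nonneg.2 hq₁) (sub_nonneg.2 h),
      mul_nonneg (sub_nonneg.2 hq₁) (sub_nonneg.2 hS₀),
      mul_nonneg (by linarith : (0 : ℝ) ≤ q) (sub_nonneg.2 hS₀)]

lemma cos_add_lt_gFun_mul {ψ q : ℝ} (hq₀ : 0.9 ≤ q) (hq₁ : q ≤ 1.32) (hS₀ : 0.2 ≤ sin ψ)
    (hS₁ : sin ψ ≤ 0.2415) (hC : 0 < cos ψ) :
    cos ψ + 2 * (q - 0.9) < gFun ψ q * (cos ψ - 2 * (q - 0.9) * sin ψ) := by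
  have hpi₀ := pi_gt_three
  have hpi₁ := pi_lt_d6
  have hC₀ : 0.97 ≤ cos ψ := by nlinarith [sin_sq_add_cos_sq ψ]
  have hcos : 0 < cos (ψ - q) := cos_sub_pos_s15 hC (by linarith) (by linarith) (by linarith)
  set D := (1.5708 - q) * cos ψ + sin ψ
  have hD : cos (ψ - q) ≤ D := by
    show cos (ψ - q) ≤ (1.5708 - q) * cos ψ + sin ψ
    have := mul_le_mul_of_nonneg_right (by linarith : π / 2 - q ≤ 1.5708 - q) hC.le
    linarith [cos_sub_le hC.le (by linarith) (by linarith : q ≤ π / 2)]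
  have hT : -2 ≤ q * tan ψ := by
    have : 0 ≤ tan ψ := by rw [tan_eq_sin_div_cos]; exact div_nonneg (by linarith) hC.le
    nlinarith
  have hg : 0 < gFun ψ q := by unfold gFun; positivity
  have hm : 0 ≤ cos ψ - 2 * (q - 0.9) * sin ψ := by nlinarith
  have hCD : 0 < cos ψ * D := mul_pos hC (hcos.trans_le hD)
  refine lt_of_mul_lt_mul_right ?_ hCD.le
  calc (cos ψ + 2 * (q - 0.9)) * (cos ψ * D)
      < (cos ψ - 2 * (q - 0.9) * sin ψ) * (cos ψ + q * sin ψ / 2) ^ 2 :=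
        polynomial_ineq_of_bounds hq₀ hq₁ hS₀ hS₁ hC₀ (by linarith [sin_sq_add_cos_sq ψ])
    _ ≤ (cos ψ - 2 * (q - 0.9) * sin ψ) * (cos ψ * (gFun ψ q * cos (ψ - q))) :=
        mul_le_mul_of_nonneg_left (sq_cos_add_mul_sin_half_le hC hT hcos.ne') hm
    _ ≤ gFun ψ q * (cos ψ - 2 * (q - 0.9) * sin ψ) * (cos ψ * D) := by
        have := mul_le_mul_of_nonneg_left hD (mul_nonneg hm (mul_nonneg hC.le hg.le))
        linarith

/-- Let `t ∈ [π + 1, 5]`, `ψ = arcsin(1/t)`, `q ∈ [0, 1.32]`,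
and set `x_Q = (t + 1)/(t + g_ψ(q))`.  Then `q + (cot ψ / 2)·ln x_Q < 0.9`. -/
theorem q_add_half_cot_log_lt (t : ℝ) (ht : t ∈ Set.Icc (π + 1) 5)
    (ψ : ℝ) (hψ : ψ = Real.arcsin (1 / t))
    (q : ℝ) (hq : q ∈ Set.Icc (0 : ℝ) 1.32) :
    q + Real.cot ψ / 2 * Real.log ((t + 1) / (t + gFun ψ q)) < 0.9 := by
  obtain ⟨ht₁, ht₂⟩ := ht
  obtain ⟨hq₀, hq₁⟩ := hq
  have hpi := pi_gt_d4
  have ht₀ : 0 < t := by linarith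
  have hsin : sin ψ = 1 / t := by
    rw [hψ, sin_arcsin (by linarith [one_div_pos.2 ht₀]) ((div_le_one ht₀).2 (by linarith))]
  have hS₀ : 0.2 ≤ sin ψ := by rw [hsin, le_div_iff₀ ht₀]; linarith
  have hS₁ : sin ψ ≤ 0.2415 := by rw [hsin, div_le_iff₀ ht₀]; linarith
  have hC : 0 < cos ψ := by
    rw [hψ, cos_arcsin, sqrt_pos, ← hsin]
    nlinarith
  have hg : 1 ≤ gFun ψ q :=
    one_le_gFun_s15 hC (by linarith) hq₀ (cos_sub_pos_s15 hC (by linarith) hq₀ (by linarith))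
  refine add_cot_div_two_mul_log_lt ht₀ (by linarith) (by rw [hsin]; field_simp) hC.le ?_
  rcases lt_or_ge q 0.9 with hq | hq
  · have hneg : (q - 0.9) * (1 + gFun ψ q * sin ψ) < 0 :=
      mul_neg_of_neg_of_pos (by linarith) (by nlinarith)
    linarith [mul_nonneg hC.le (sub_nonneg.2 hg)]
  · linarith [cos_add_lt_gFun_mul hq hq₁ hS₀ hS₁ hC]
end
end
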